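/- If both the lengths of maximal 0-blocks and of maximal 1-blocks of strings α and β over {0,1} are uniformly bounded, then α and β are quasi-isometric to each other; in particular both are quasi-isometric to (01)^ω. -/

import Mathlib

/-!
A string whose constant runs have length at most `K` changes colour within every window of
`K + 1` positions; over two colours it therefore shows every colour within distance `K` to the
right of any position. So for any binary `α`, sending `n` to some `m ∈ [n, n + K]` with
`β m = α n` moves every point by at most `K`, and such a bounded perturbation of the identity
is a colour-preserving `(K + 1, K)`-quasi-isometry.
-/

def IsQI {Γ : Type*} (α β : ℕ → Γ) (f : ℕ → ℕ) (A B : ℝ) : Prop :=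
  1 ≤ A ∧ 0 ≤ B ∧ (∀ n, α n = β (f n)) ∧
  (∀ x y : ℕ, (1 / A) * |(x : ℝ) - (y : ℝ)| - B ≤ |(f x : ℝ) - (f y : ℝ)| ∧
      |(f x : ℝ) - (f y : ℝ)| ≤ A * |(x : ℝ) - (y : ℝ)| + B) ∧
  (∀ m : ℕ, ∃ x : ℕ, |(m : ℝ) - (f x : ℝ)| ≤ A)

/-- `α ≤_QI β`: there is a quasi-isometry from `α` to `β`. -/
def QI {Γ : Type*} (α β : ℕ → Γ) : Prop := ∃ f A B, IsQI α β f A B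

def RunsBoundedBy {Γ : Type*} (γ : ℕ → Γ) (K : ℕ) : Prop :=
  ∀ i len : ℕ, (∀ j < len, γ (i + j) = γ i) → len ≤ K

def alternating : ℕ → Fin 2 := fun i => if i % 2 = 0 then 0 else 1

section
variable {Γ : Type*}

theorem isQI_add_of_le {α β : ℕ → Γ} {K : ℕ} (s : ℕ → ℕ) (hsK : ∀ n, s n ≤ K)
    (hβ : ∀ n, β (n + s n) = α n) : IsQI α β (fun n => n + s n) (K + 1) K := by
  have hK : (0 : ℝ) ≤ K := K.cast_nonneg
  have hs : ∀ n, (s n : ℝ) ≤ K := fun n => by exact_mod_cast hsK n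
  refine ⟨by linarith, hK, fun n => (hβ n).symm, fun x y => ?_, fun m => ⟨m, ?_⟩⟩
  · set d : ℝ := (x : ℝ) - y
    set e : ℝ := (s x : ℝ) - s y
    have he : |e| ≤ K := abs_sub_le_iff.mpr ⟨by linarith [hs x], by linarith [hs y]⟩
    have hfxy : ((x + s x : ℕ) : ℝ) - ((y + s y : ℕ) : ℝ) = d + e := by push_cast; ring
    have hshrink : 1 / ((K : ℝ) + 1) * |d| ≤ |d| :=
      mul_le_of_le_one_left (abs_nonneg d) ((div_le_one (by positivity)).mpr (by linarith))
    rw [hfxy]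
    constructor
    · calc 1 / ((K : ℝ) + 1) * |d| - K ≤ |d| - |e| := by linarith
        _ ≤ |d + e| := by simpa using abs_sub_abs_le_abs_sub d (-e)
    · calc |d + e| ≤ |d| + |e| := abs_add_le d e
        _ ≤ (K + 1) * |d| + K := by nlinarith [abs_nonneg d]
  · have hm : (m : ℝ) - ((m + s m : ℕ) : ℝ) = -(s m : ℝ) := by push_cast; ring
    rw [hm, abs_neg, Nat.abs_cast]
    linarith [hs m]

theorem qi_of_forall_exists_le {α β : ℕ → Γ} (K : ℕ)
    (h : ∀ n, ∃ j ≤ K, β (n + j) = α n) : QI α β := by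
  choose s hsK hβ using h
  exact ⟨_, _, _, isQI_add_of_le s hsK hβ⟩

theorem RunsBoundedBy.exists_ne {γ : ℕ → Γ} {K : ℕ} (hγ : RunsBoundedBy γ K) (n : ℕ) :
    ∃ j ≤ K, γ (n + j) ≠ γ n := by
  by_contra! h
  have := hγ n (K + 1) fun j hj => h j (Nat.lt_succ_iff.mp hj)
  omega

end

theorem RunsBoundedBy.exists_eq {β : ℕ → Fin 2} {K : ℕ} (hβ : RunsBoundedBy β K) (n : ℕ)
    (c : Fin 2) : ∃ j ≤ K, β (n + j) = c := by
  by_cases hc : β n = c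
  · exact ⟨0, K.zero_le, hc⟩
  · obtain ⟨j, hjK, hj⟩ := hβ.exists_ne n
    exact ⟨j, hjK, by omega⟩

theorem qi_of_runsBoundedBy (α : ℕ → Fin 2) {β : ℕ → Fin 2} {K : ℕ}
    (hβ : RunsBoundedBy β K) : QI α β :=
  qi_of_forall_exists_le K fun n => hβ.exists_eq n (α n)

theorem alternating_runsBoundedBy_one : RunsBoundedBy alternating 1 := by
  intro i len h
  by_contra! hlen
  have := h 1 hlen
  simp only [alternating] at this
  split_ifs at this <;> omega

theorem bounded_blocks_QI (α β : ℕ → Fin 2) (K : ℕ)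
    (hα : ∀ i len : ℕ, (∀ j < len, α (i + j) = α i) → len ≤ K)
    (hβ : ∀ i len : ℕ, (∀ j < len, β (i + j) = β i) → len ≤ K) :
    QI α β ∧ QI β α ∧
    QI α (fun i => if i % 2 = 0 then (0 : Fin 2) else 1) ∧
    QI (fun i => if i % 2 = 0 then (0 : Fin 2) else 1) α ∧
    QI β (fun i => if i % 2 = 0 then (0 : Fin 2) else 1) ∧
    QI (fun i => if i % 2 = 0 then (0 : Fin 2) else 1) β :=
  ⟨qi_of_runsBoundedBy α hβ, qi_of_runsBoundedBy β hα,
    qi_of_runsBoundedBy α alternating_runsBoundedBy_one, qi_of_runsBoundedBy alternating hα,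
    qi_of_runsBoundedBy β alternating_runsBoundedBy_one, qi_of_runsBoundedBy alternating hβ⟩
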